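/- Let M be a group having at least one infinite cyclic subgroup (i.e., an element of infinite order). Then there exists an extended finite automaton A over M such that L(A) is not regular and gmc_A(n) ∈ O(√n). -/

import Mathlib

open scoped Classical

/-- An extended finite automaton (EFA) over a group `M`, with input alphabet `V`:
a finite automaton whose transitions additionally multiply a group register by elements
of `M`. -/
structure EFA (V M : Type) [Group M] where
  /-- States. -/
  Q : Type
  [fQ : Fintype Q]
  /-- Transition function: finitely many (state, group element) pairs per state and letter. -/
  δ : Q → V → Set (Q × M)
  fin : ∀ q a, (δ q a).Finite
  /-- Initial state. -/
  q₀ : Q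
  /-- Final states. -/
  F : Set Q

variable {V M : Type} [Group M]

/-- `A.Steps c c' k` : the EFA `A` goes from configuration `c` (state, remaining input,
register) to configuration `c'` using exactly `k` transitions whose group element is not the
identity. -/
inductive EFA.Steps (A : EFA V M) :
    A.Q × List V × M → A.Q × List V × M → ℕ → Prop
  | refl (c : A.Q × List V × M) : Steps A c c 0
  | step {s : A.Q} {r : M} {q : A.Q} {w : List V} {m : M} {c : A.Q × List V × M} {k : ℕ}
      {a : V} (h : (s, r) ∈ A.δ q a) (ih : Steps A (s, w, m * r) c k) :
      Steps A (q, a :: w, m) c (if r = 1 then k else k + 1)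

/-- The word `w` is accepted using exactly `k` non-identity group elements: starting from the
initial state with register `1`, the whole input is read and a final state is reached with
register `1`. -/
def EFA.AcceptsN (A : EFA V M) (w : List V) (k : ℕ) : Prop :=
  ∃ q ∈ A.F, A.Steps (A.q₀, w, 1) (q, [], 1) k

/-- The language accepted by an EFA. -/
def EFA.language (A : EFA V M) : Language V := {w | ∃ k, A.AcceptsN w k}

/-- Group memory complexity of a word: the minimal number of non-identity group elements used
over all accepting computations (`0` if the word is not accepted). -/
noncomputable def EFA.gmcW (A : EFA V M) (w : List V) : ℕ :=
  sInf {k | A.AcceptsN w k}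

/-- Group memory complexity of the EFA: maximum over words of length `n`. -/
noncomputable def EFA.gmcFun (A : EFA V M) (n : ℕ) : ℕ :=
  sSup {m | ∃ w : List V, w.length = n ∧ A.gmcW w = m}

/-- `f ∈ O(h)` for `ℕ`-valued functions. -/
def InO (f h : ℕ → ℕ) : Prop := ∃ c : ℕ, ∀ n, f n ≤ c * h n + c

/-- `f ∈ Ω(n)`: there is a rational constant `1/c > 0` with `f n ≥ n/c` for infinitely many `n`. -/
def InOmegaLinear (f : ℕ → ℕ) : Prop := ∃ c : ℕ, 0 < c ∧ ∀ m : ℕ, ∃ n ≥ m, n ≤ c * f n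

/-!
Take the staircase language of the words `b a b a² b ⋯ aᶜ⁻¹ b`, the concatenations of the blocks
`aⁱ b` for `i < c`. Its word lengths `c (c + 1) / 2` have unbounded gaps, so by the pumping
lemma it is not regular, and neither is its complement, which the automaton accepts.
A word outside the staircase language starts with `a`, ends inside a block, or has a first
wrong block: `aⁱ b a^p b` with `p ≠ i + 1` right after a correct prefix. In the last case the
automaton guesses the position of `aⁱ`.
It certifies `p ≤ i` by multiplying the register by `g` on `p` letters of `aⁱ` and by `g⁻¹` on
every letter of `a^p`, and `p ≥ i + 2` by multiplying by `g` on each letter of `aⁱ`, by `g²` on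
the `b`, and by `g⁻¹` on `i + 2` letters of `a^p`. Since `g` has infinite order, the register
returns to `1` only when the certified inequality holds. At most `2 i + 3` non-identity
elements are used, while the correct prefix already has length `(i + 1) (i + 2) / 2`, at most
the length `n` of the word, so `i = O(√n)`.
-/

namespace EFA

def StepsLE (A : EFA V M) (c c' : A.Q × List V × M) (n : ℕ) : Prop :=
  ∃ k ≤ n, A.Steps c c' k

variable {A : EFA V M}

theorem Steps.trans {c₁ c₂ c₃ : A.Q × List V × M} {k₁ k₂ : ℕ}
    (h₁ : A.Steps c₁ c₂ k₁) (h₂ : A.Steps c₂ c₃ k₂) : A.Steps c₁ c₃ (k₁ + k₂) := by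
  induction h₁ with
  | refl => simpa using h₂
  | step hr _ ih =>
    have := Steps.step hr (ih h₂)
    split_ifs at this ⊢ <;> simpa [Nat.add_right_comm] using this

namespace StepsLE

theorem refl (c : A.Q × List V × M) : A.StepsLE c c 0 := ⟨0, le_rfl, .refl c⟩

theorem mono {c c' : A.Q × List V × M} {n n' : ℕ} (h : A.StepsLE c c' n) (hn : n ≤ n') :
    A.StepsLE c c' n' :=
  let ⟨k, hk, h⟩ := h; ⟨k, hk.trans hn, h⟩

theorem trans {c₁ c₂ c₃ : A.Q × List V × M} {n₁ n₂ : ℕ}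
    (h₁ : A.StepsLE c₁ c₂ n₁) (h₂ : A.StepsLE c₂ c₃ n₂) : A.StepsLE c₁ c₃ (n₁ + n₂) :=
  let ⟨k₁, hk₁, h₁⟩ := h₁; let ⟨k₂, hk₂, h₂⟩ := h₂; ⟨k₁ + k₂, by omega, h₁.trans h₂⟩

theorem cons {q s : A.Q} {x : V} {r m : M} {w : List V} {c : A.Q × List V × M} {n : ℕ}
    (hr : (s, r) ∈ A.δ q x) (h : A.StepsLE (s, w, m * r) c n) :
    A.StepsLE (q, x :: w, m) c (n + 1) :=
  let ⟨_, hk, h⟩ := h; ⟨_, by split_ifs <;> omega, .step hr h⟩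

theorem cons_one {q s : A.Q} {x : V} {m : M} {w : List V} {c : A.Q × List V × M} {n : ℕ}
    (hr : (s, 1) ∈ A.δ q x) (h : A.StepsLE (s, w, m) c n) : A.StepsLE (q, x :: w, m) c n :=
  let ⟨k, hk, h⟩ := h; ⟨k, hk, by simpa using Steps.step (m := m) hr (by simpa using h)⟩

theorem loop_replicate {q : A.Q} {x : V} {r : M} (hr : (q, r) ∈ A.δ q x) (n : ℕ)
    (w : List V) (m : M) :
    A.StepsLE (q, List.replicate n x ++ w, m) (q, w, m * r ^ n) n := by
  induction n generalizing m with
  | zero => simpa using refl _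
  | succ n ih => simpa [List.replicate_succ, pow_succ', mul_assoc] using cons hr (ih (m * r))

theorem loop_one {q : A.Q} {u : List V} (hu : ∀ x ∈ u, (q, 1) ∈ A.δ q x) (w : List V)
    (m : M) : A.StepsLE (q, u ++ w, m) (q, w, m) 0 := by
  induction u with
  | nil => exact refl _
  | cons x u ih => exact cons_one (hu x (by simp)) (ih fun y hy => hu y (by simp [hy]))

theorem cons_of_subset {q q' qf : A.Q} {x : V} {w : List V} {m m' : M} {n : ℕ}
    (hδ : A.δ q' x ⊆ A.δ q x) (h : A.StepsLE (q', x :: w, m) (qf, [], m') n) :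
    A.StepsLE (q, x :: w, m) (qf, [], m') n := by
  obtain ⟨k, hk, h⟩ := h
  cases h with
  | step hr h => exact ⟨_, hk, .step (hδ hr) h⟩

theorem exists_acceptsN {qf : A.Q} {w : List V} {n : ℕ} (hf : qf ∈ A.F)
    (h : A.StepsLE (A.q₀, w, 1) (qf, [], 1) n) : ∃ k ≤ n, A.AcceptsN w k :=
  let ⟨k, hk, h⟩ := h; ⟨k, hk, qf, hf, h⟩

end StepsLE

theorem gmcW_le {w : List V} {k : ℕ} (h : A.AcceptsN w k) : A.gmcW w ≤ k :=
  Nat.sInf_le h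

theorem gmcW_eq_zero {w : List V} (h : w ∉ A.language) : A.gmcW w = 0 := by
  have : {k | A.AcceptsN w k} = ∅ := Set.eq_empty_of_forall_notMem fun k hk => h ⟨k, hk⟩
  rw [gmcW, this, Nat.sInf_empty]

theorem gmcFun_le {n b : ℕ} (h : ∀ w : List V, w.length = n → A.gmcW w ≤ b) :
    A.gmcFun n ≤ b :=
  csSup_le' <| by rintro _ ⟨w, hw, rfl⟩; exact h w hw

end EFA

theorem Language.not_isRegular_of_length_gaps {α : Type*} {L : Language α}
    (h : ∀ K, ∃ w ∈ L, K ≤ w.length ∧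
      ∀ w' ∈ L, w'.length ≤ w.length ∨ w.length + K < w'.length) :
    ¬ L.IsRegular := by
  rintro ⟨σ, _, D, rfl⟩
  obtain ⟨w, hw, hK, hgap⟩ := h (Fintype.card σ)
  obtain ⟨x, y, z, rfl, hxy, hy, hpump⟩ := D.pumping_lemma hw hK
  have hpumped : x ++ y ++ y ++ z ∈ D.accepts := hpump <| Language.mem_mul.2
    ⟨x ++ (y ++ y), Language.mem_mul.2 ⟨x, rfl, y ++ y, by
      simpa using Language.join_mem_kstar (l := {y}) (L := [y, y]) (by simp; rfl), rfl⟩,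
      z, rfl, by simp⟩
  have := List.length_pos_of_ne_nil hy
  have := hgap _ hpumped
  simp only [List.length_append] at this
  omega

theorem List.replicate_append_cons_inj {α : Type*} {x y : α} (hxy : x ≠ y) :
    ∀ {p q : ℕ} {u v : List α},
      replicate p x ++ y :: u = replicate q x ++ y :: v → p = q ∧ u = v
  | 0, 0, _, _, h => by simpa using h
  | 0, _ + 1, _, _, h => by simp [replicate_succ] at h; exact absurd h.1.symm hxy
  | _ + 1, 0, _, _, h => by simp [replicate_succ] at h; exact absurd h.1 hxy
  | _ + 1, _ + 1, _, _, h => by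
    simp only [replicate_succ, cons_append, cons.injEq, true_and] at h
    simpa using replicate_append_cons_inj hxy h

theorem Nat.le_two_mul_sqrt {i n : ℕ} (h : (i + 1) * (i + 1) ≤ 2 * n) : i ≤ 2 * n.sqrt := by
  have := Nat.lt_succ_sqrt n
  by_contra! hc
  nlinarith

namespace Staircase

inductive Letter | a | b
  deriving DecidableEq

open Letter List EFA

instance : Fintype Letter := ⟨{a, b}, fun x => by cases x <;> simp⟩

def blocks : ℕ → ℕ → List Letter
  | _, 0 => []
  | j, c + 1 => replicate j a ++ b :: blocks (j + 1) c

def words : Language Letter := {w | ∃ c, w = blocks 0 c}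

theorem blocks_succ (j c : ℕ) : blocks j (c + 1) = replicate j a ++ b :: blocks (j + 1) c :=
  rfl

theorem blocks_succ' (j c : ℕ) :
    blocks j (c + 1) = blocks j c ++ (replicate (j + c) a ++ [b]) := by
  induction c generalizing j with
  | zero => simp [blocks]
  | succ c ih => rw [blocks_succ, ih, blocks_succ]; simp [Nat.add_right_comm, Nat.add_assoc]

theorem two_mul_length_blocks_zero (c : ℕ) : 2 * (blocks 0 c).length = c * (c + 1) := by
  induction c with
  | zero => rfl
  | succ c ih =>
    rw [blocks_succ']
    simp only [length_append, length_replicate, length_singleton]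
    nlinarith

theorem blocks_eq_replicate_append_cons {j c p : ℕ} {w : List Letter}
    (h : blocks j c = replicate p a ++ b :: w) :
    ∃ c', c = c' + 1 ∧ p = j ∧ w = blocks (j + 1) c' := by
  cases c with
  | zero => simp [blocks] at h
  | succ c' =>
    obtain ⟨rfl, rfl⟩ := replicate_append_cons_inj (by simp) h.symm
    exact ⟨c', rfl, rfl, rfl⟩

theorem blocks_ne_replicate_succ_append (j c : ℕ) (w : List Letter) :
    blocks j c ≠ replicate (j + 1) a ++ w := by
  cases c with
  | zero => simp [blocks]
  | succ c => simp [blocks_succ, replicate_succ']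

theorem blocks_ne_append_a (j c : ℕ) (u : List Letter) : blocks j c ≠ u ++ [a] := by
  cases c with
  | zero => simp [blocks]
  | succ c =>
    intro h
    rw [blocks_succ', ← append_assoc] at h
    simpa using (append_inj' h rfl).2

theorem exists_blocks_of_eq_append_cons {j c : ℕ} {u w : List Letter}
    (h : blocks j c = u ++ b :: w) : ∃ j' c', w = blocks j' c' := by
  induction c generalizing j u with
  | zero => simp [blocks] at h
  | succ c ih =>
    rw [blocks_succ, append_eq_append_iff] at h
    rcases h with ⟨_ | ⟨x, u'⟩, -, h⟩ | ⟨_ | ⟨x, u'⟩, hu, h⟩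
    · exact ⟨j + 1, c, (cons.inj h).2.symm⟩
    · exact ih (cons.inj h).2
    · exact ⟨j + 1, c, (cons.inj h).2⟩
    · have : b ∈ replicate j a := by simp [hu, (cons.inj h).1]
      simp at this

theorem exists_eq_replicate_append (w : List Letter) :
    ∃ p, w = replicate p a ∨ ∃ w', w = replicate p a ++ b :: w' := by
  induction w with
  | nil => exact ⟨0, .inl rfl⟩
  | cons x w ih =>
    cases x with
    | a =>
      obtain ⟨p, h⟩ := ih
      exact ⟨p + 1, by simpa [replicate_succ] using h⟩
    | b => exact ⟨0, .inr ⟨w, rfl⟩⟩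

theorem eq_blocks_append (w : List Letter) (j : ℕ) :
    ∃ c, w = blocks j c ∨ (∃ r, w = blocks j c ++ replicate (r + 1) a) ∨
      ∃ p w', p ≠ j + c ∧ w = blocks j c ++ (replicate p a ++ b :: w') := by
  obtain ⟨p, rfl | ⟨w', rfl⟩⟩ := exists_eq_replicate_append w
  · cases p with
    | zero => exact ⟨0, .inl rfl⟩
    | succ r => exact ⟨0, .inr (.inl ⟨r, rfl⟩)⟩
  · by_cases hp : p = j
    · subst hp
      obtain ⟨c, h⟩ := eq_blocks_append w' (p + 1)
      refine ⟨c + 1, ?_⟩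
      rcases h with rfl | ⟨r, rfl⟩ | ⟨q, w'', hq, rfl⟩
      · exact .inl rfl
      · exact .inr (.inl ⟨r, by simp [blocks_succ]⟩)
      · exact .inr (.inr ⟨q, w'', by omega, by simp [blocks_succ]⟩)
    · exact ⟨0, .inr (.inr ⟨p, w', hp, rfl⟩)⟩
termination_by w.length
decreasing_by subst_vars; simp; omega

theorem not_isRegular_words : ¬ words.IsRegular := by
  refine Language.not_isRegular_of_length_gaps fun K => ⟨blocks 0 K, ⟨K, rfl⟩, ?_, ?_⟩
  · have := two_mul_length_blocks_zero K
    nlinarith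
  · rintro _ ⟨c, rfl⟩
    have hK := two_mul_length_blocks_zero K
    have hc := two_mul_length_blocks_zero c
    rcases le_or_gt c K with h | h
    · exact .inl (by nlinarith)
    · exact .inr (by nlinarith)

inductive State | start | sink | skip | trailingA | short₁ | short₂ | long₁ | long₂
  deriving DecidableEq

open State

instance : Fintype State :=
  ⟨{start, sink, skip, trailingA, short₁, short₂, long₁, long₂}, fun q => by cases q <;> simp⟩

/- The start of the word is a block boundary, so on `b` the initial state may also behave as
`skip`, `short₁` or `long₁`. -/
def transition (g : M) : State → Letter → Set (State × M)
  | start, a => {(sink, 1)}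
  | start, b => {(skip, 1), (short₁, 1), (long₁, 1), (short₂, 1), (long₂, g ^ 2)}
  | sink, _ => {(sink, 1)}
  | skip, a => {(skip, 1), (trailingA, 1)}
  | skip, b => {(skip, 1), (short₁, 1), (long₁, 1)}
  | trailingA, _ => ∅
  | short₁, a => {(short₁, g), (short₁, 1)}
  | short₁, b => {(short₂, 1)}
  | short₂, a => {(short₂, g⁻¹)}
  | short₂, b => {(sink, 1)}
  | long₁, a => {(long₁, g)}
  | long₁, b => {(long₂, g ^ 2)}
  | long₂, a => {(long₂, g⁻¹), (sink, g⁻¹)}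
  | long₂, b => ∅

abbrev efa (g : M) : EFA Letter M where
  Q := State
  δ := transition g
  fin q x := by cases q <;> cases x <;> simp [transition]
  q₀ := start
  F := {sink, trailingA}

variable {g : M}

theorem transition_subset_start_b {q : State} (hq : q = skip ∨ q = short₁ ∨ q = long₁) :
    transition g q b ⊆ transition g start b := by
  rcases hq with rfl | rfl | rfl <;> intro _ <;> simp [transition] <;> tauto

theorem sink_run (u : List Letter) (m : M) : (efa g).StepsLE (sink, u, m) (sink, [], m) 0 := by
  simpa using StepsLE.loop_one (A := efa g) (q := sink)
    (fun x _ => by cases x <;> simp [transition]) [] m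

theorem skip_run (u w : List Letter) (m : M) :
    (efa g).StepsLE (skip, u ++ w, m) (skip, w, m) 0 :=
  StepsLE.loop_one (A := efa g) (q := skip) (fun x _ => by cases x <;> simp [transition]) w m

theorem short_run {i p : ℕ} (hp : p ≤ i) (w : List Letter) (m : M) :
    (efa g).StepsLE (short₁, replicate i a ++ b :: (replicate p a ++ b :: w), m)
      (sink, [], m) (2 * p) := by
  obtain ⟨d, rfl⟩ := Nat.exists_eq_add_of_le hp
  have count := StepsLE.loop_replicate (A := efa g) (q := short₁) (x := a) (r := g)
    (by simp [transition]) p (replicate d a ++ b :: (replicate p a ++ b :: w)) m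
  have skip := StepsLE.loop_one (A := efa g) (q := short₁) (u := replicate d a)
    (by simp [transition]) (b :: (replicate p a ++ b :: w)) (m * g ^ p)
  have uncount := StepsLE.loop_replicate (A := efa g) (q := short₂) (x := a) (r := g⁻¹)
    (by simp [transition]) p (b :: w) (m * g ^ p)
  rw [show m * g ^ p * g⁻¹ ^ p = m by group] at uncount
  have finish : (efa g).StepsLE (short₂, b :: w, m) (sink, [], m) 0 :=
    StepsLE.cons_one (by simp [transition]) (sink_run w m)
  have compare : (efa g).StepsLE (short₁, b :: (replicate p a ++ b :: w), m * g ^ p)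
      (sink, [], m) p :=
    StepsLE.cons_one (by simp [transition]) (uncount.trans finish)
  rw [replicate_add, append_assoc]
  exact ((count.trans skip).trans compare).mono (by omega)

theorem long_run (i : ℕ) (w : List Letter) (m : M) :
    (efa g).StepsLE (long₁, replicate i a ++ b :: (replicate (i + 2) a ++ w), m)
      (sink, [], m) (2 * i + 3) := by
  have count := StepsLE.loop_replicate (A := efa g) (q := long₁) (x := a) (r := g)
    (by simp [transition]) i (b :: (replicate (i + 2) a ++ w)) m
  have uncount := StepsLE.loop_replicate (A := efa g) (q := long₂) (x := a) (r := g⁻¹)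
    (by simp [transition]) (i + 1) (a :: w) (m * g ^ i * g ^ 2)
  rw [show m * g ^ i * g ^ 2 * g⁻¹ ^ (i + 1) = m * g by group] at uncount
  have finish : (efa g).StepsLE (long₂, a :: w, m * g) (sink, [], m) 1 :=
    StepsLE.cons (s := sink) (r := g⁻¹) (by simp [transition]) (by simpa using sink_run w m)
  have compare : (efa g).StepsLE (long₁, b :: (replicate (i + 2) a ++ w), m * g ^ i)
      (sink, [], m) (i + 1 + 1 + 1) := by
    refine StepsLE.cons (s := long₂) (r := g ^ 2) (by simp [transition]) ?_
    rw [replicate_succ', append_assoc]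
    exact uncount.trans finish
  exact (count.trans compare).mono (by omega)

theorem start_run_of_block_run {X qf : State} (hX : X = short₁ ∨ X = long₁) {i n : ℕ}
    {Y : List Letter} {m m' : M}
    (h : (efa g).StepsLE (X, replicate i a ++ b :: Y, m) (qf, [], m') n) :
    (efa g).StepsLE (start, blocks 0 i ++ (replicate i a ++ b :: Y), m) (qf, [], m') n := by
  cases i with
  | zero => exact StepsLE.cons_of_subset (transition_subset_start_b (.inr hX)) h
  | succ i =>
    have hX' : (X, (1 : M)) ∈ transition g skip b := by
      rcases hX with rfl | rfl <;> simp [transition]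
    have hskip : (efa g).StepsLE (skip, blocks 0 (i + 1) ++ (replicate (i + 1) a ++ b :: Y), m)
        (qf, [], m') n := by
      rw [blocks_succ', zero_add, append_assoc, append_assoc, singleton_append, ← append_assoc,
        ← zero_add n]
      exact (skip_run _ _ m).trans (StepsLE.cons_one hX' h)
    exact StepsLE.cons_of_subset (transition_subset_start_b (.inl rfl)) hskip

theorem start_run_of_ne {i p : ℕ} (hp : p ≠ i + 1) (w : List Letter) :
    (efa g).StepsLE (start, blocks 0 (i + 1) ++ (replicate p a ++ b :: w), 1) (sink, [], 1)
      (2 * i + 3) := by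
  rw [blocks_succ', zero_add, append_assoc, append_assoc, singleton_append]
  rcases Nat.lt_or_gt_of_ne hp with hp | hp
  · exact (start_run_of_block_run (.inl rfl) (short_run (by omega) w 1)).mono (by omega)
  · obtain ⟨d, rfl⟩ := Nat.exists_eq_add_of_lt hp
    rw [show i + 1 + d + 1 = i + 2 + d by omega, replicate_add, append_assoc]
    exact start_run_of_block_run (.inr rfl) (long_run i _ 1)

theorem start_run_cons_a (w : List Letter) :
    (efa g).StepsLE (start, a :: w, 1) (sink, [], 1) 0 :=
  StepsLE.cons_one (by simp [transition]) (sink_run w 1)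

theorem start_run_b_append_a (u : List Letter) :
    (efa g).StepsLE (start, b :: (u ++ [a]), 1) (trailingA, [], 1) 0 :=
  StepsLE.cons_one (s := skip) (by simp [transition])
    ((skip_run u [a] 1).trans (StepsLE.cons_one (by simp [transition]) (.refl _)))

theorem exists_acceptsN_of_not_mem {w : List Letter} (hw : w ∉ words) :
    ∃ k ≤ 4 * w.length.sqrt + 3, (efa g).AcceptsN w k := by
  obtain ⟨c, hc | ⟨r, rfl⟩ | ⟨p, w', hp, rfl⟩⟩ := eq_blocks_append w 0
  · exact absurd ⟨c, hc⟩ hw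
  · cases c with
    | zero => exact ((start_run_cons_a _).mono (Nat.zero_le _)).exists_acceptsN (by simp)
    | succ c =>
      have := start_run_b_append_a (g := g) (blocks 1 c ++ replicate r a)
      rw [append_assoc, ← replicate_succ'] at this
      exact (this.mono (Nat.zero_le _)).exists_acceptsN (by simp)
  · cases c with
    | zero =>
      obtain ⟨p, rfl⟩ := Nat.exists_eq_add_of_lt (Nat.pos_of_ne_zero hp)
      exact ((start_run_cons_a _).mono (Nat.zero_le _)).exists_acceptsN (by simp)
    | succ i =>
      have hlen : (i + 1) * (i + 1) ≤
          2 * (blocks 0 (i + 1) ++ (replicate p a ++ b :: w')).length := by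
        have := two_mul_length_blocks_zero (i + 1)
        rw [length_append]
        nlinarith
      have := Nat.le_two_mul_sqrt hlen
      exact ((start_run_of_ne (by omega) w').mono (by omega)).exists_acceptsN (by simp)

def ShortNext (g : M) (w : List Letter) (m : M) : Prop :=
  ∃ v d e w', w = replicate (v + d) a ++ b :: (replicate e a ++ b :: w') ∧ m * g ^ v = g ^ e

def LongNext (g : M) (w : List Letter) (m : M) : Prop :=
  ∃ p d w', w = replicate p a ++ b :: (replicate (d + 1) a ++ w') ∧
    m * g ^ (p + 2) = g ^ (d + 1)

def SkipCond (g : M) (w : List Letter) (m : M) : Prop :=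
  ∃ u w', w = u ++ w' ∧
    (w' = [a] ∧ m = 1 ∨ ∃ w'', w' = b :: w'' ∧ (ShortNext g w'' m ∨ LongNext g w'' m))

def AcceptCond (g : M) : State → List Letter → M → Prop
  | start, w, m =>
    (∃ w', w = a :: w' ∧ m = 1) ∨ SkipCond g w m ∨ ShortNext g w m ∨ LongNext g w m
  | sink, _, m => m = 1
  | skip, w, m => SkipCond g w m
  | trailingA, w, m => w = [] ∧ m = 1
  | short₁, w, m => ShortNext g w m
  | short₂, w, m => ∃ e w', w = replicate e a ++ b :: w' ∧ m = g ^ e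
  | long₁, w, m => LongNext g w m
  | long₂, w, m => ∃ d w', w = replicate (d + 1) a ++ w' ∧ m = g ^ (d + 1)

theorem SkipCond.cons {w : List Letter} {m : M} (x : Letter) (h : SkipCond g w m) :
    SkipCond g (x :: w) m :=
  let ⟨u, w', hw, h⟩ := h; ⟨x :: u, w', by simp [hw], h⟩

theorem skipCond_b {w : List Letter} {m : M} (h : ShortNext g w m ∨ LongNext g w m) :
    SkipCond g (b :: w) m :=
  ⟨[], b :: w, rfl, .inr ⟨w, rfl, h⟩⟩

theorem shortNext_b {w : List Letter} {m : M} (h : AcceptCond g short₂ w m) :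
    ShortNext g (b :: w) m :=
  let ⟨e, w', hw, hm⟩ := h; ⟨0, 0, e, w', by simp [hw], by simp [hm]⟩

theorem longNext_b {w : List Letter} {m : M} (h : AcceptCond g long₂ w (m * g ^ 2)) :
    LongNext g (b :: w) m :=
  let ⟨d, w', hw, hm⟩ := h; ⟨0, d, w', by simp [hw], by simpa using hm⟩

theorem acceptCond_cons_a {q s : State} {r m : M} {w : List Letter}
    (hr : (s, r) ∈ transition g q a) (hs : AcceptCond g s w (m * r)) :
    AcceptCond g q (a :: w) m := by
  cases q <;>
    simp only [transition, Set.mem_insert_iff, Set.mem_singleton_iff, Prod.mk.injEq,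
      Set.mem_empty_iff_false] at hr <;>
    rcases hr with ⟨rfl, hr⟩ | ⟨rfl, hr⟩ <;>
    subst r <;> simp only [AcceptCond, mul_one] at hs ⊢
  · exact .inl ⟨w, rfl, hs⟩
  · exact hs
  · exact hs.cons a
  · exact ⟨[], [a], by simp [hs.1], .inl ⟨rfl, hs.2⟩⟩
  · obtain ⟨v, d, e, w', rfl, hm⟩ := hs
    refine ⟨v + 1, d, e, w', by rw [Nat.add_right_comm, replicate_succ, cons_append], ?_⟩
    rw [pow_succ', ← mul_assoc, hm]
  · obtain ⟨v, d, e, w', rfl, hm⟩ := hs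
    exact ⟨v, d + 1, e, w', by rw [← Nat.add_assoc, replicate_succ, cons_append], hm⟩
  · obtain ⟨e, w', rfl, hm⟩ := hs
    exact ⟨e + 1, w', by rw [replicate_succ, cons_append],
      by rw [pow_succ, ← hm, inv_mul_cancel_right]⟩
  · obtain ⟨p, d, w', rfl, hm⟩ := hs
    refine ⟨p + 1, d, w', by simp [replicate_succ], ?_⟩
    rw [show p + 1 + 2 = p + 2 + 1 by omega, pow_succ', ← mul_assoc, hm]
  · obtain ⟨d, w', rfl, hm⟩ := hs
    exact ⟨d + 1, w', by simp [replicate_succ],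
      by rw [pow_succ _ (d + 1), ← hm, inv_mul_cancel_right]⟩
  · exact ⟨0, w, by simp, by simpa [mul_inv_eq_one] using hs⟩

theorem acceptCond_cons_b {q s : State} {r m : M} {w : List Letter}
    (hr : (s, r) ∈ transition g q b) (hs : AcceptCond g s w (m * r)) :
    AcceptCond g q (b :: w) m := by
  cases q <;>
    simp only [transition, Set.mem_insert_iff, Set.mem_singleton_iff, Prod.mk.injEq,
      Set.mem_empty_iff_false] at hr <;>
    rcases hr with ⟨rfl, hr⟩ | ⟨rfl, hr⟩ | ⟨rfl, hr⟩ | ⟨rfl, hr⟩ | ⟨rfl, hr⟩ <;>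
    subst r <;> simp only [AcceptCond, mul_one] at hs ⊢
  · exact .inr (.inl (hs.cons b))
  · exact .inr (.inl (skipCond_b (.inl hs)))
  · exact .inr (.inl (skipCond_b (.inr hs)))
  · exact .inr (.inr (.inl (shortNext_b hs)))
  · exact .inr (.inr (.inr (longNext_b hs)))
  · exact hs
  · exact hs.cons b
  · exact skipCond_b (.inl hs)
  · exact skipCond_b (.inr hs)
  · exact shortNext_b hs
  · exact ⟨0, w, rfl, by simp [hs]⟩
  · exact longNext_b hs

theorem acceptCond_cons {q s : State} {x : Letter} {r m : M} {w : List Letter}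
    (hr : (s, r) ∈ transition g q x) (hs : AcceptCond g s w (m * r)) :
    AcceptCond g q (x :: w) m := by
  cases x
  exacts [acceptCond_cons_a hr hs, acceptCond_cons_b hr hs]

theorem acceptCond_of_steps {c c' : (efa g).Q × List Letter × M} {k : ℕ}
    (h : (efa g).Steps c c' k) (hf : c'.1 ∈ (efa g).F) (hw : c'.2.1 = []) (hm : c'.2.2 = 1) :
    AcceptCond g c.1 c.2.1 c.2.2 := by
  induction h with
  | refl c =>
    obtain ⟨q, w, m⟩ := c
    simp only at hw hm
    subst hw hm
    rcases hf with rfl | rfl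
    exacts [rfl, ⟨rfl, rfl⟩]
  | step hr _ ih => exact acceptCond_cons hr (ih hf hw hm)

theorem not_shortNext_blocks (hg : ¬ IsOfFinOrder g) (j c : ℕ) :
    ¬ ShortNext g (blocks j c) 1 := by
  rintro ⟨v, d, e, w', hw, hm⟩
  obtain ⟨c', -, hvd, hw⟩ := blocks_eq_replicate_append_cons hw
  obtain ⟨-, -, rfl, -⟩ := blocks_eq_replicate_append_cons hw.symm
  have := injective_pow_iff_not_isOfFinOrder.2 hg (one_mul (g ^ v) ▸ hm)
  omega

theorem not_longNext_blocks (hg : ¬ IsOfFinOrder g) (j c : ℕ) :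
    ¬ LongNext g (blocks j c) 1 := by
  rintro ⟨p, d, w', hw, hm⟩
  obtain ⟨c', -, rfl, hw⟩ := blocks_eq_replicate_append_cons hw
  obtain rfl : d = p + 1 := by
    have := injective_pow_iff_not_isOfFinOrder.2 hg (one_mul (g ^ (p + 2)) ▸ hm)
    omega
  exact blocks_ne_replicate_succ_append (p + 1) c' w' hw.symm

theorem not_skipCond_blocks (hg : ¬ IsOfFinOrder g) (j c : ℕ) :
    ¬ SkipCond g (blocks j c) 1 := by
  rintro ⟨u, w', hw, ⟨rfl, -⟩ | ⟨w'', rfl, h⟩⟩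
  · exact blocks_ne_append_a j c u hw
  · obtain ⟨j', c', rfl⟩ := exists_blocks_of_eq_append_cons hw
    exact h.elim (not_shortNext_blocks hg j' c') (not_longNext_blocks hg j' c')

theorem not_acceptsN_blocks (hg : ¬ IsOfFinOrder g) (c k : ℕ) :
    ¬ (efa g).AcceptsN (blocks 0 c) k := by
  rintro ⟨qf, hf, h⟩
  rcases acceptCond_of_steps h hf rfl rfl with ⟨w', hw, -⟩ | h | h | h
  · exact blocks_ne_replicate_succ_append 0 c w' hw
  · exact not_skipCond_blocks hg 0 c h
  · exact not_shortNext_blocks hg 0 c h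
  · exact not_longNext_blocks hg 0 c h

theorem language_efa (hg : ¬ IsOfFinOrder g) : (efa g).language = wordsᶜ := by
  ext w
  constructor
  · rintro ⟨k, hk⟩ ⟨c, rfl⟩
    exact not_acceptsN_blocks hg c k hk
  · intro hw
    obtain ⟨k, -, hk⟩ := exists_acceptsN_of_not_mem (g := g) hw
    exact ⟨k, hk⟩

end Staircase

/-- If a group `M` has an element of infinite order (equivalently, an infinite cyclic
subgroup), then there is an EFA over `M` accepting a non-regular language with group memory
complexity in `O(√n)`. -/
theorem efa_infinite_order_sqrt (M : Type) [Group M] (g : M) (hg : ¬ IsOfFinOrder g) :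
    ∃ (V : Type) (_ : Fintype V) (A : EFA V M),
      ¬ A.language.IsRegular ∧ InO A.gmcFun Nat.sqrt := by
  refine ⟨Staircase.Letter, inferInstance, Staircase.efa g, ?_, 4, fun n => ?_⟩
  · rw [Staircase.language_efa hg, Language.IsRegular_compl]
    exact Staircase.not_isRegular_words
  · refine EFA.gmcFun_le fun w hw => ?_
    by_cases h : w ∈ Staircase.words
    · rw [EFA.gmcW_eq_zero (by rw [Staircase.language_efa hg]; exact fun h' => h' h)]
      omega
    · obtain ⟨k, hk, hacc⟩ := Staircase.exists_acceptsN_of_not_mem (g := g) h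
      exact (EFA.gmcW_le hacc).trans (by rw [← hw]; omega)
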